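/- arXiv:1711.05711 — 2 statements merged into one kernel-verified Lean document; each statement's English description precedes it below -/
import Mathlib

section
/- With notation as in the Pohozaev setting, let U = {u ∈ H¹(ℝ^N) : ∫|∇u|² dx = 1 and ∫G(u) dx > 0} and M = {u ∈ H¹(ℝ^N)\{0} : ∫|∇u|² = 2*∫G(u)}. Then the map m: U → M, m(u) = u(r(u)·) with r(u) = (2*∫G(u) dx)^{1/2}, is a bijection with inverse m^{-1}(u) = u(ψ(u)^{1/(N-2)} ·), where ψ(u) = ∫|∇u|² dx. -/
open MeasureTheory Filter Topology

noncomputable section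

/-- Membership in `H¹(ℝ^N)`, modelled by differentiable functions `u` with
`u ∈ L²` and `∇u ∈ L²`. -/
def MemH1 (N : ℕ) (u : EuclideanSpace ℝ (Fin N) → ℝ) : Prop :=
  Differentiable ℝ u ∧ MemLp u 2 volume ∧ MemLp (gradient u) 2 volume

/-- The set `U = {u ∈ H¹ : ∫|∇u|² = 1, ∫G(u) > 0}`. -/
def Uset (N : ℕ) (G : ℝ → ℝ) : Set (EuclideanSpace ℝ (Fin N) → ℝ) :=
  {u | MemH1 N u ∧ Integrable (fun x => G (u x)) volume ∧
    (∫ x, ‖gradient u x‖ ^ 2) = 1 ∧ 0 < ∫ x, G (u x)}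

/-- The Pohozaev manifold `M = {u ∈ H¹ \ {0} : ∫|∇u|² = 2* ∫G(u)}`. -/
def Mset (N : ℕ) (G : ℝ → ℝ) : Set (EuclideanSpace ℝ (Fin N) → ℝ) :=
  {u | MemH1 N u ∧ Integrable (fun x => G (u x)) volume ∧
    ¬ (u =ᵐ[volume] (fun _ => (0:ℝ))) ∧
    (∫ x, ‖gradient u x‖ ^ 2) = (2 * (N:ℝ)) / ((N:ℝ) - 2) * ∫ x, G (u x)}

/-- The map `m(u) = u(r(u)·)`, `r(u) = (2* ∫ G(u))^{1/2}`. -/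
def mMap (N : ℕ) (G : ℝ → ℝ) (u : EuclideanSpace ℝ (Fin N) → ℝ) :
    EuclideanSpace ℝ (Fin N) → ℝ :=
  fun x => u (Real.sqrt ((2 * (N:ℝ)) / ((N:ℝ) - 2) * ∫ z, G (u z)) • x)

/-- The map `m⁻¹(u) = u(ψ(u)^{1/(N-2)}·)`, `ψ(u) = ∫|∇u|²`. -/
def mInv (N : ℕ) (u : EuclideanSpace ℝ (Fin N) → ℝ) :
    EuclideanSpace ℝ (Fin N) → ℝ :=
  fun x => u (((∫ z, ‖gradient u z‖ ^ 2) ^ (1 / ((N:ℝ) - 2))) • x)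

/-!
Dilating `u ↦ u(c·)` multiplies `∫ |∇u|²` by `c^(2-N)` and `∫ G(u)` by `c^(-N)`. Hence on `U`
the Pohozaev identity singles out exactly one scale, `c = r(u)`, and on `M` the normalisation
`∫ |∇u|² = 1` singles out `c = ψ(u)^(1/(N-2))`; these two dilations undo each other. The one
analytic input is that `ψ(u) > 0` on `M`: a differentiable `L²` function whose gradient vanishes
almost everywhere is zero.
-/

section Dilation

variable {E F : Type*} [NormedAddCommGroup E] [NormedSpace ℝ E] [MeasurableSpace E]
  [BorelSpace E] [FiniteDimensional ℝ E] {μ : Measure E} [μ.IsAddHaarMeasure]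
  [NormedAddCommGroup F]

theorem MeasureTheory.MemLp.comp_smul {f : E → F} {p : ENNReal} (hf : MemLp f p μ) {c : ℝ}
    (hc : c ≠ 0) : MemLp (fun x => f (c • x)) p μ := by
  have hmap : MemLp f p (μ.map (c • ·)) := by
    rw [Measure.map_addHaar_smul μ hc]
    exact hf.smul_measure ENNReal.ofReal_ne_top
  exact (memLp_map_measure_iff hmap.1 (measurable_const_smul c).aemeasurable).mp hmap

end Dilation

section Constancy

variable {E F : Type*} [NormedAddCommGroup E] [NormedSpace ℝ E] [MeasurableSpace E]
  [BorelSpace E] [FiniteDimensional ℝ E] {μ : Measure E} [μ.IsAddHaarMeasure]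
  [NormedAddCommGroup F] [NormedSpace ℝ F] [CompleteSpace F]

theorem eq_of_hasDerivAt_of_ae_eq_zero {g g' : ℝ → F} (hg : ∀ t, HasDerivAt g (g' t) t)
    (h0 : ∀ᵐ t, g' t = 0) (a b : ℝ) : g a = g b := by
  have hint : ∫ t in b..a, g' t = g a - g b :=
    intervalIntegral.integral_eq_sub_of_hasDerivAt (fun t _ => hg t)
      ((integrable_zero ℝ F volume).congr (h0.mono fun t ht => ht.symm)).intervalIntegrable
  rw [intervalIntegral.integral_congr_ae (h0.mono fun t ht _ => ht),
    intervalIntegral.integral_zero] at hint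
  exact sub_eq_zero.mp hint.symm

/-- By Fubini, the derivative vanishes almost everywhere on almost every line in direction `v`,
so `u (· + v) = u` almost everywhere, hence everywhere by continuity. -/
theorem Differentiable.add_eq_of_fderiv_ae_eq_zero {u : E → F} (hu : Differentiable ℝ u)
    (h : ∀ᵐ x ∂μ, fderiv ℝ u x = 0) (x v : E) : u (x + v) = u x := by
  have hline : ∀ᵐ z ∂μ, ∀ᵐ t : ℝ, fderiv ℝ u (z + t • v) = 0 := by
    rw [Measure.ae_ae_comm]
    · exact ae_of_all _ fun t =>
        (measurePreserving_add_right μ (t • v)).quasiMeasurePreserving.ae h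
    · exact (measurable_fderiv ℝ u).comp (measurable_fst.add (measurable_snd.smul_const v))
        (measurableSet_singleton 0)
  have hae : (fun z => u (z + v)) =ᵐ[μ] u := by
    filter_upwards [hline] with z hz
    have hderiv (t : ℝ) :
        HasDerivAt (fun t : ℝ => u (z + t • v)) (fderiv ℝ u (z + t • v) v) t :=
      (hu _).hasFDerivAt.comp_hasDerivAt t
        (by simpa using ((hasDerivAt_id t).smul_const v).const_add z)
    simpa using eq_of_hasDerivAt_of_ae_eq_zero hderiv (hz.mono fun t ht => by simp [ht]) 1 0
  exact congrFun ((Continuous.ae_eq_iff_eq μ (hu.continuous.comp (continuous_add_const v))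
    hu.continuous).mp hae) x

theorem Differentiable.eq_zero_of_memLp_of_fderiv_ae_eq_zero [Nontrivial E] {u : E → F}
    (hu : Differentiable ℝ u) {p : ENNReal} (hp₀ : p ≠ 0) (hp : p ≠ ⊤) (hLp : MemLp u p μ)
    (h : ∀ᵐ x ∂μ, fderiv ℝ u x = 0) : u = 0 := by
  have hconst : u = fun _ => u 0 := funext fun x => by
    simpa using hu.add_eq_of_fderiv_ae_eq_zero h 0 x
  rw [hconst] at hLp ⊢
  rcases (memLp_const_iff hp₀ hp).mp hLp with hu0 | hfin
  · rw [hu0]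
    rfl
  · exact absurd hfin (by simp [measure_univ_of_isAddLeftInvariant])

end Constancy

section Gradient

theorem gradient_comp_smul {E : Type*} [NormedAddCommGroup E] [InnerProductSpace ℝ E]
    [CompleteSpace E] (u : E → ℝ) (c : ℝ) (x : E) :
    gradient (fun y => u (c • y)) x = c • gradient u (c • x) := by
  simp only [gradient, fderiv_comp_smul, map_smul]

variable {E : Type*} [NormedAddCommGroup E] [InnerProductSpace ℝ E] [MeasurableSpace E]
  [BorelSpace E] [FiniteDimensional ℝ E] {μ : Measure E} [μ.IsAddHaarMeasure]

theorem integral_norm_gradient_sq_comp_smul (u : E → ℝ) {c : ℝ} (hc : 0 ≤ c) :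
    ∫ x, ‖gradient (fun y => u (c • y)) x‖ ^ 2 ∂μ
      = c ^ 2 * (c ^ Module.finrank ℝ E)⁻¹ * ∫ x, ‖gradient u x‖ ^ 2 ∂μ := by
  simp only [gradient_comp_smul, norm_smul, mul_pow, Real.norm_eq_abs, sq_abs]
  rw [integral_const_mul, Measure.integral_comp_smul_of_nonneg μ (fun y => ‖gradient u y‖ ^ 2) c
    (hR := hc), smul_eq_mul, mul_assoc]

theorem integral_norm_gradient_sq_pos [Nontrivial E] {u : E → ℝ} (hu : Differentiable ℝ u)
    (hL2 : MemLp u 2 μ) (hgrad : MemLp (gradient u) 2 μ) (hu0 : ¬ u =ᵐ[μ] 0) :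
    0 < ∫ x, ‖gradient u x‖ ^ 2 ∂μ := by
  refine (integral_nonneg fun x => by positivity).lt_of_ne fun h => hu0 ?_
  have hgrad0 : ∀ᵐ x ∂μ, ‖gradient u x‖ ^ 2 = 0 :=
    (integral_eq_zero_iff_of_nonneg (fun x => by positivity)
      (hgrad.integrable_norm_pow two_ne_zero)).mp h.symm
  have hfderiv0 : ∀ᵐ x ∂μ, fderiv ℝ u x = 0 := hgrad0.mono fun x hx => by
    simpa [gradient] using hx
  rw [hu.eq_zero_of_memLp_of_fderiv_ae_eq_zero two_ne_zero ENNReal.ofNat_ne_top hL2 hfderiv0]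

end Gradient

theorem sq_mul_inv_pow_eq_inv_rpow {c : ℝ} (hc : 0 < c) (n : ℕ) :
    c ^ 2 * (c ^ n)⁻¹ = (c ^ ((n : ℝ) - 2))⁻¹ := by
  rw [Real.rpow_sub hc, Real.rpow_natCast, Real.rpow_two]
  field_simp

section Pohozaev

variable {N : ℕ} {G : ℝ → ℝ} {u : EuclideanSpace ℝ (Fin N) → ℝ}

theorem EuclideanSpace.integral_comp_smul_of_nonneg (f : EuclideanSpace ℝ (Fin N) → ℝ) {c : ℝ}
    (hc : 0 ≤ c) : ∫ x, f (c • x) = (c ^ N)⁻¹ * ∫ x, f x := by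
  rw [Measure.integral_comp_smul_of_nonneg volume f c (hR := hc), finrank_euclideanSpace_fin,
    smul_eq_mul]

theorem MemH1.comp_smul (hu : MemH1 N u) {c : ℝ} (hc : c ≠ 0) :
    MemH1 N (fun x => u (c • x)) := by
  obtain ⟨hdiff, hL2, hgrad⟩ := hu
  refine ⟨hdiff.comp (differentiable_id.const_smul c), hL2.comp_smul hc, ?_⟩
  simp only [funext (gradient_comp_smul u c)]
  exact (hgrad.const_smul c).comp_smul hc

theorem mMap_mem_Mset_and_mInv_mMap (hN : 3 ≤ N) (hG0 : G 0 = 0) (hu : u ∈ Uset N G) :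
    mMap N G u ∈ Mset N G ∧ mInv N (mMap N G u) = u := by
  obtain ⟨hH1, hGint, hψ, hA⟩ := hu
  have hd : (0 : ℝ) < N - 2 := by
    rw [sub_pos]
    exact_mod_cast hN
  have hpA : 0 < 2 * N / (N - 2) * ∫ z, G (u z) := mul_pos (by positivity) hA
  set r := Real.sqrt (2 * N / (N - 2) * ∫ z, G (u z))
  have hr : 0 < r := Real.sqrt_pos.mpr hpA
  have hmMap : mMap N G u = fun x => u (r • x) := rfl
  have hGm : ∫ x, G (mMap N G u x) = (r ^ N)⁻¹ * ∫ z, G (u z) := by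
    rw [hmMap, EuclideanSpace.integral_comp_smul_of_nonneg (fun z => G (u z)) hr.le]
  have hψm : ∫ x, ‖gradient (mMap N G u) x‖ ^ 2 = (r ^ ((N : ℝ) - 2))⁻¹ := by
    rw [hmMap, integral_norm_gradient_sq_comp_smul u hr.le, finrank_euclideanSpace_fin, hψ,
      mul_one, sq_mul_inv_pow_eq_inv_rpow hr]
  refine ⟨⟨hH1.comp_smul hr.ne', hGint.comp_smul hr.ne', fun hm0 => ?_, ?_⟩, ?_⟩
  · have hGm0 : ∫ x, G (mMap N G u x) = 0 :=
      integral_eq_zero_of_ae (hm0.mono fun x hx => by simp [hx, hG0])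
    rw [hGm] at hGm0
    exact (mul_pos (by positivity) hA).ne' hGm0
  · rw [hψm, hGm, ← sq_mul_inv_pow_eq_inv_rpow hr, Real.sq_sqrt hpA.le]
    ring
  · funext x
    change u (r • ((∫ z, ‖gradient (mMap N G u) z‖ ^ 2) ^ (1 / ((N : ℝ) - 2))) • x) = u x
    rw [hψm, Real.inv_rpow (by positivity), one_div, Real.rpow_rpow_inv hr.le hd.ne', smul_smul,
      mul_inv_cancel₀ hr.ne', one_smul]

theorem mInv_mem_Uset_and_mMap_mInv (hN : 3 ≤ N) (hu : u ∈ Mset N G) :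
    mInv N u ∈ Uset N G ∧ mMap N G (mInv N u) = u := by
  obtain ⟨hH1, hGint, hu0, hPoh⟩ := hu
  have hd : (0 : ℝ) < N - 2 := by
    rw [sub_pos]
    exact_mod_cast hN
  have hp : (0 : ℝ) < 2 * N / (N - 2) := by positivity
  have : NeZero N := ⟨by omega⟩
  set ψ := ∫ z, ‖gradient u z‖ ^ 2
  have hψ : 0 < ψ := integral_norm_gradient_sq_pos hH1.1 hH1.2.1 hH1.2.2 hu0
  set l := ψ ^ (1 / ((N : ℝ) - 2))
  have hl : 0 < l := Real.rpow_pos_of_pos hψ _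
  have hld : l ^ ((N : ℝ) - 2) = ψ := by
    simpa only [l, one_div] using Real.rpow_inv_rpow hψ.le hd.ne'
  have hmInv : mInv N u = fun x => u (l • x) := rfl
  have hψm : ∫ x, ‖gradient (mInv N u) x‖ ^ 2 = 1 := by
    rw [hmInv, integral_norm_gradient_sq_comp_smul u hl.le, finrank_euclideanSpace_fin,
      sq_mul_inv_pow_eq_inv_rpow hl, hld, inv_mul_cancel₀ hψ.ne']
  have hGm : ∫ x, G (mInv N u x) = (l ^ N)⁻¹ * (ψ / (2 * N / (N - 2))) := by
    rw [hmInv, EuclideanSpace.integral_comp_smul_of_nonneg (fun z => G (u z)) hl.le, hPoh,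
      mul_div_cancel_left₀ _ hp.ne']
  have hr : Real.sqrt (2 * N / (N - 2) * ∫ x, G (mInv N u x)) = l⁻¹ := by
    have hsq : 2 * N / (N - 2) * ((l ^ N)⁻¹ * (ψ / (2 * N / (N - 2)))) = l⁻¹ ^ 2 :=
      calc _ = l ^ 2 * (l ^ N)⁻¹ * ψ / l ^ 2 := by field_simp
        _ = l⁻¹ ^ 2 := by
          rw [sq_mul_inv_pow_eq_inv_rpow hl, hld, inv_mul_cancel₀ hψ.ne', one_div, inv_pow]
    rw [hGm, hsq, Real.sqrt_sq (inv_nonneg.mpr hl.le)]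
  refine ⟨⟨hH1.comp_smul hl.ne', hGint.comp_smul hl.ne', hψm, ?_⟩, ?_⟩
  · rw [hGm]
    positivity
  · funext x
    change u (l • (Real.sqrt (2 * N / (N - 2) * ∫ x, G (mInv N u x)) • x)) = u x
    rw [hr, smul_smul, mul_inv_cancel₀ hl.ne', one_smul]

end Pohozaev

theorem mMap_bijective_general (N : ℕ) (hN : 3 ≤ N)
    (G : ℝ → ℝ) (hG0 : G 0 = 0) :
    Set.BijOn (mMap N G) (Uset N G) (Mset N G) ∧
    (∀ u ∈ Uset N G, mInv N (mMap N G u) = u) ∧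
    (∀ u ∈ Mset N G, mMap N G (mInv N u) = u) := by
  have hU (u) (hu : u ∈ Uset N G) := mMap_mem_Mset_and_mInv_mMap hN hG0 hu
  have hM (u) (hu : u ∈ Mset N G) := mInv_mem_Uset_and_mMap_mInv hN hu
  refine ⟨Set.InvOn.bijOn ⟨fun u hu => (hU u hu).2, fun u hu => (hM u hu).2⟩
    (fun u hu => (hU u hu).1) (fun u hu => (hM u hu).1), fun u hu => (hU u hu).2,
    fun u hu => (hM u hu).2⟩

/-- Proposition 4.1 (ii): `m : U → M`, `m(u) = u(r(u)·)` with
`r(u) = (2* ∫G(u))^{1/2}`, is a bijection from `U` onto the Pohozaev manifold `M`,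
with inverse `m⁻¹(u) = u(ψ(u)^{1/(N-2)}·)` where `ψ(u) = ∫|∇u|²`. -/
theorem mMap_bijective (N : ℕ) (hN : 3 ≤ N)
    (G : ℝ → ℝ) (hGcont : Continuous G) (hG0 : G 0 = 0)
    (hGgrowth : ∃ C > (0:ℝ), ∀ s : ℝ,
      |G s| ≤ C * (s ^ 2 + |s| ^ ((2 * (N:ℝ)) / ((N:ℝ) - 2)))) :
    Set.BijOn (mMap N G) (Uset N G) (Mset N G) ∧
    (∀ u ∈ Uset N G, mInv N (mMap N G u) = u) ∧
    (∀ u ∈ Mset N G, mMap N G (mInv N u) = u) :=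
  mMap_bijective_general N hN G hG0
end
end

section
/- Let g = g₁ − g₂ be as in the Pohozaev setting with g₂(s) = ms + g₃(s), where g₃(s)s ≥ 0 for all s ∈ ℝ and m > 0. Suppose (w_n) ⊂ H¹(ℝ^N) with w_n ⇀ ũ weakly in H¹, ∫g₃(w_n)w_n dx and m∫|w_n|² dx are each bounded, ∫g₂(w_n)w_n dx → ∫g₂(ũ)ũ dx, and liminf ∫g₃(w_n)w_n dx ≥ ∫g₃(ũ)ũ dx (by Fatou). Then ∫|w_n|² dx → ∫|ũ|² dx, and hence w_n → ũ strongly in L²(ℝ^N). -/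
open MeasureTheory Filter Topology

/-!
Split `∫ g₂(w) w = m ∫ w² + ∫ g₃(w) w`. Since the sum converges and, by Fatou, the nonnegative
second term cannot lose mass in the limit, `limsup ∫ w_n² ≤ ∫ u²`. Conversely
`0 ≤ ∫ (w_n - u)² = ∫ w_n² - 2 ∫ w_n u + ∫ u²` and weak convergence give `liminf ∫ w_n² ≥ ∫ u²`.
With `∫ w_n² → ∫ u²`, the same expansion gives `∫ (w_n - u)² → 0`.
-/

section RealSequences

variable {ι : Type*} {l : Filter ι}

theorem tendsto_of_tendsto_add_of_le_liminf {a b c : ι → ℝ} {A B : ℝ}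
    (hsum : Tendsto (fun n => a n + b n) l (𝓝 (A + B)))
    (hb : B ≤ liminf b l) (hb_bdd : IsBoundedUnder (· ≥ ·) l b)
    (hc : Tendsto c l (𝓝 A)) (hca : ∀ᶠ n in l, c n ≤ a n) :
    Tendsto a l (𝓝 A) := by
  refine tendsto_order.2 ⟨fun A' hA' => ?_, fun A' hA' => ?_⟩
  · filter_upwards [hc.eventually (eventually_gt_nhds hA'), hca] with n h₁ h₂
    exact h₁.trans_le h₂
  · have hδ : 0 < (A' - A) / 2 := half_pos (sub_pos.2 hA')
    have hb' : ∀ᶠ n in l, B - (A' - A) / 2 < b n :=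
      eventually_lt_of_lt_liminf ((sub_lt_self B hδ).trans_le hb) hb_bdd
    have hsum' : ∀ᶠ n in l, a n + b n < A + B + (A' - A) / 2 :=
      hsum.eventually (eventually_lt_nhds (lt_add_of_pos_right _ hδ))
    filter_upwards [hb', hsum'] with n h₁ h₂
    linarith

end RealSequences

section SquareIntegrals

variable {α : Type*} [MeasurableSpace α] {μ : Measure α}

theorem integral_sub_sq {f g : α → ℝ} (hf : MemLp f 2 μ) (hg : MemLp g 2 μ) :
    ∫ x, (f x - g x) ^ 2 ∂μ
      = ∫ x, f x ^ 2 ∂μ - 2 * ∫ x, f x * g x ∂μ + ∫ x, g x ^ 2 ∂μ := by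
  have hfg : Integrable (fun x => 2 * (f x * g x)) μ := (hf.integrable_mul hg).const_mul 2
  have hdiff : Integrable (fun x => f x ^ 2 - 2 * (f x * g x)) μ := hf.integrable_sq.sub hfg
  simp_rw [sub_sq, mul_assoc]
  rw [integral_add hdiff hg.integrable_sq,
    integral_sub hf.integrable_sq hfg, integral_const_mul]

theorem two_mul_integral_mul_sub_le_integral_sq {f g : α → ℝ} (hf : MemLp f 2 μ)
    (hg : MemLp g 2 μ) :
    2 * ∫ x, f x * g x ∂μ - ∫ x, g x ^ 2 ∂μ ≤ ∫ x, f x ^ 2 ∂μ := by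
  have h := (integral_nonneg fun x => sq_nonneg (f x - g x) : 0 ≤ ∫ x, (f x - g x) ^ 2 ∂μ)
  rw [integral_sub_sq hf hg] at h
  linarith

theorem tendsto_integral_sub_sq_of_tendsto {f : ℕ → α → ℝ} {g : α → ℝ}
    (hf : ∀ n, MemLp (f n) 2 μ) (hg : MemLp g 2 μ)
    (hnorm : Tendsto (fun n => ∫ x, f n x ^ 2 ∂μ) atTop (𝓝 (∫ x, g x ^ 2 ∂μ)))
    (hweak : Tendsto (fun n => ∫ x, f n x * g x ∂μ) atTop (𝓝 (∫ x, g x ^ 2 ∂μ))) :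
    Tendsto (fun n => ∫ x, (f n x - g x) ^ 2 ∂μ) atTop (𝓝 0) := by
  simp_rw [integral_sub_sq (hf _) hg]
  convert (hnorm.sub (hweak.const_mul 2)).add_const (∫ x, g x ^ 2 ∂μ) using 2
  ring

theorem integral_mul_self_eq_of_eq_mul_add {g₂ g₃ : ℝ → ℝ} {m : ℝ}
    (hdef : ∀ s, g₂ s = m * s + g₃ s) {v : α → ℝ} (hv : MemLp v 2 μ)
    (hvi : Integrable (fun x => g₃ (v x) * v x) μ) :
    ∫ x, g₂ (v x) * v x ∂μ = m * (∫ x, v x ^ 2 ∂μ) + ∫ x, g₃ (v x) * v x ∂μ := by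
  simp_rw [hdef, add_mul, mul_assoc, ← sq]
  rw [integral_add (hv.integrable_sq.const_mul m) hvi, integral_const_mul]

end SquareIntegrals

theorem strong_L2_convergence_general (N : ℕ)
    (g₂ g₃ : ℝ → ℝ) (m : ℝ) (hm : 0 < m)
    (hdef : ∀ s, g₂ s = m * s + g₃ s)
    (hg₃ : ∀ s, 0 ≤ g₃ s * s)
    (w : ℕ → EuclideanSpace ℝ (Fin N) → ℝ) (u : EuclideanSpace ℝ (Fin N) → ℝ)
    (hwmem : ∀ n, MemLp (w n) 2 (volume : Measure (EuclideanSpace ℝ (Fin N))))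
    (humem : MemLp u 2 (volume : Measure (EuclideanSpace ℝ (Fin N))))
    (hwint : ∀ n, Integrable (fun x => g₃ (w n x) * w n x) volume)
    (huint : Integrable (fun x => g₃ (u x) * u x) volume)
    (hweak : ∀ v : EuclideanSpace ℝ (Fin N) → ℝ, MemLp v 2 volume →
      Tendsto (fun n => ∫ x, w n x * v x) atTop (𝓝 (∫ x, u x * v x)))
    (hconv : Tendsto (fun n => ∫ x, g₂ (w n x) * w n x) atTop
      (𝓝 (∫ x, g₂ (u x) * u x)))
    (hfatou : (∫ x, g₃ (u x) * u x) ≤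
      liminf (fun n => ∫ x, g₃ (w n x) * w n x) atTop) :
    Tendsto (fun n => ∫ x, (w n x) ^ 2) atTop (𝓝 (∫ x, (u x) ^ 2)) ∧
    Tendsto (fun n => ∫ x, (w n x - u x) ^ 2) atTop (𝓝 0) := by
  have hcross : Tendsto (fun n => ∫ x, w n x * u x) atTop (𝓝 (∫ x, u x ^ 2)) := by
    simpa only [← sq] using hweak u humem
  have hsplit : Tendsto (fun n => m * (∫ x, w n x ^ 2) + ∫ x, g₃ (w n x) * w n x) atTop
      (𝓝 (m * (∫ x, u x ^ 2) + ∫ x, g₃ (u x) * u x)) := by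
    rw [← integral_mul_self_eq_of_eq_mul_add hdef humem huint]
    exact hconv.congr fun n => integral_mul_self_eq_of_eq_mul_add hdef (hwmem n) (hwint n)
  have hlower : Tendsto (fun n => m * (2 * (∫ x, w n x * u x) - ∫ x, u x ^ 2)) atTop
      (𝓝 (m * ∫ x, u x ^ 2)) := by
    convert ((hcross.const_mul 2).sub_const _).const_mul m using 2
    ring
  have hmass : Tendsto (fun n => m * ∫ x, w n x ^ 2) atTop (𝓝 (m * ∫ x, u x ^ 2)) := by
    refine tendsto_of_tendsto_add_of_le_liminf hsplit hfatou
      ⟨0, eventually_map.2 (.of_forall fun n => integral_nonneg fun x => hg₃ _)⟩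
      hlower (.of_forall fun n => ?_)
    have := two_mul_integral_mul_sub_le_integral_sq (hwmem n) humem
    gcongr
  have hnorm : Tendsto (fun n => ∫ x, w n x ^ 2) atTop (𝓝 (∫ x, u x ^ 2)) := by
    simpa only [inv_mul_cancel_left₀ hm.ne'] using hmass.const_mul m⁻¹
  exact ⟨hnorm, tendsto_integral_sub_sq_of_tendsto hwmem humem hnorm hcross⟩

/-- final compactness step in Lemma 4.7: with `g₂(s) = ms + g₃(s)`,
`g₃(s)s ≥ 0`, `m > 0`, if `w_n ⇀ ũ` weakly in `L²(ℝ^N)`, the quantities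
`∫ g₃(w_n)w_n` and `∫ |w_n|²` are bounded, `∫ g₂(w_n)w_n → ∫ g₂(ũ)ũ`, and (Fatou)
`liminf ∫ g₃(w_n)w_n ≥ ∫ g₃(ũ)ũ`, then `∫|w_n|² → ∫|ũ|²` and hence `w_n → ũ`
strongly in `L²(ℝ^N)`. -/
theorem strong_L2_convergence (N : ℕ) (hN : 3 ≤ N)
    (g₂ g₃ : ℝ → ℝ) (m : ℝ) (hm : 0 < m)
    (hdef : ∀ s, g₂ s = m * s + g₃ s)
    (hg₃ : ∀ s, 0 ≤ g₃ s * s)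
    (w : ℕ → EuclideanSpace ℝ (Fin N) → ℝ) (u : EuclideanSpace ℝ (Fin N) → ℝ)
    (hwmem : ∀ n, MemLp (w n) 2 (volume : Measure (EuclideanSpace ℝ (Fin N))))
    (humem : MemLp u 2 (volume : Measure (EuclideanSpace ℝ (Fin N))))
    (hwint : ∀ n, Integrable (fun x => g₃ (w n x) * w n x) volume)
    (huint : Integrable (fun x => g₃ (u x) * u x) volume)
    (hweak : ∀ v : EuclideanSpace ℝ (Fin N) → ℝ, MemLp v 2 volume →
      Tendsto (fun n => ∫ x, w n x * v x) atTop (𝓝 (∫ x, u x * v x)))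
    (hbdd : ∃ C : ℝ, ∀ n,
      (∫ x, g₃ (w n x) * w n x) ≤ C ∧ (∫ x, (w n x) ^ 2) ≤ C)
    (hconv : Tendsto (fun n => ∫ x, g₂ (w n x) * w n x) atTop
      (𝓝 (∫ x, g₂ (u x) * u x)))
    (hfatou : (∫ x, g₃ (u x) * u x) ≤
      liminf (fun n => ∫ x, g₃ (w n x) * w n x) atTop) :
    Tendsto (fun n => ∫ x, (w n x) ^ 2) atTop (𝓝 (∫ x, (u x) ^ 2)) ∧
    Tendsto (fun n => ∫ x, (w n x - u x) ^ 2) atTop (𝓝 0) :=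
  strong_L2_convergence_general N g₂ g₃ m hm hdef hg₃ w u hwmem humem hwint huint hweak hconv hfatou
end
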